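/- Let c, p : [0,∞) → ℝ be differentiable and satisfy c' = k1(e0 − c)(s0 − c − p) − k1·K_M·c and p' = k2·c with c(0) = 0, p(0) = 0, where k1, k−1, k2, e0, s0 > 0 and K_M = (k−1+k2)/k1. Assume 0 ≤ c(t) ≤ λ, 0 ≤ p(t), and c(t) + p(t) ≤ s0 for all t ≥ 0, where λ = ½(e0+K_M+s0) − ½√((e0+K_M+s0)² − 4e0·s0), and let h⁻(p) = ½(e0+K_M+s0−p) − ½√((e0+K_M+s0−p)² − 4e0(s0−p)). Then limsup_{t→∞} (c(t) − h⁻(p(t)))² ≤ λ²·ε_LT², where ε_LT = (η/(1+η))·(1/(1+κ))·(2K_M/(K_M + √(K_M² + 4e0·K_M))), η = e0/K_M, κ = k−1/k2. -/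

import Mathlib

/-!
Write `q = s0 - p` for the total substrate and `u = c - h⁻(q)` for the tQSSA error. The
`c`-equation factors through the two roots `h⁻ ≤ h⁺` of the `c`-nullcline, so along the flow
`u' = k1 (c - h⁻)(c - h⁺) + k2 c · h⁻'(q)`. The slope of the nullcline satisfies
`(e0 + KM)(KM + √(KM² + 4 e0 KM)) · h⁻'(q) ≤ 2 e0 (h⁺ - q)`, which with `B = λ ε_LT` and
`c ≤ λ` makes the drift term at most `k1 B (h⁺ - c)`. Hence `u' ≤ 0` whenever `u ≥ B`, and
`u' ≥ k1 B KM > 0` whenever `u ≤ -B`. As `u(0) = -λ`, the error never exceeds `B`, reaches `-B`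
in finite time, and then stays in `[-B, B]`.
-/

open Real Filter Set

theorem image_le_of_hasDerivAt_nonpos_above {u u' : ℝ → ℝ} {a B : ℝ}
    (hu : ∀ t, a ≤ t → HasDerivAt u (u' t) t) (ha : u a ≤ B)
    (hB : ∀ t, a ≤ t → B ≤ u t → u' t ≤ 0) : ∀ t, a ≤ t → u t ≤ B := by
  intro t ht
  refine le_of_forall_pos_le_add fun ε hε => ?_
  -- the barrier `B + δ (x - a)` has slope `δ > 0 ≥ u'` wherever `u` touches it
  set δ := ε / (t - a + 1)
  have hδ : 0 < δ := div_pos hε (by linarith)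
  have hbarrier := image_le_of_deriv_right_lt_deriv_boundary (a := a) (b := t)
    (B := fun x => B + δ * (x - a)) (B' := fun _ => δ)
    (fun x hx => (hu x hx.1).continuousAt.continuousWithinAt)
    (fun x hx => (hu x hx.1).hasDerivWithinAt) (by simpa using ha)
    (fun x => by simpa using ((hasDerivAt_id x).sub_const a).const_mul δ |>.const_add B)
    (fun x hx hux => (hB x hx.1 (by
      rw [hux]; exact le_add_of_nonneg_right (mul_nonneg hδ.le (sub_nonneg.2 hx.1)))).trans_lt hδ)
    ⟨ht, le_rfl⟩
  have hδt : δ * (t - a) ≤ ε := by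
    rw [div_mul_eq_mul_div, div_le_iff₀ (by linarith)]
    nlinarith
  linarith

theorem exists_image_ge_of_hasDerivAt_ge_below {u u' : ℝ → ℝ} {a B m : ℝ}
    (hu : ∀ t, a ≤ t → HasDerivAt u (u' t) t) (hm : 0 < m)
    (hB : ∀ t, a ≤ t → u t ≤ B → m ≤ u' t) : ∃ t, a ≤ t ∧ B ≤ u t := by
  by_contra! hlt
  set T := a + (B - u a) / m
  have hT : a ≤ T := le_add_of_nonneg_right (div_nonneg (sub_nonneg.2 (hlt a le_rfl).le) hm.le)
  have hgrowth := image_le_of_deriv_right_le_deriv_boundary (a := a) (b := T)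
    (f := fun x => u a + m * (x - a)) (f' := fun _ => m) (B' := u')
    (fun x _ => by fun_prop)
    (fun x _ => by
      simpa using (((hasDerivAt_id x).sub_const a).const_mul m).const_add (u a) |>.hasDerivWithinAt)
    (by simp) (fun x hx => (hu x hx.1).continuousAt.continuousWithinAt)
    (fun x hx => (hu x hx.1).hasDerivWithinAt) (fun x hx => hB x hx.1 (hlt x hx.1).le)
    ⟨hT, le_rfl⟩
  have hreach : u a + m * (T - a) = B := by simp only [T]; field_simp; ring
  linarith [hlt T hT]

theorem eventually_image_ge_of_hasDerivAt_ge_below {u u' : ℝ → ℝ} {a B m : ℝ}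
    (hu : ∀ t, a ≤ t → HasDerivAt u (u' t) t) (hm : 0 < m)
    (hB : ∀ t, a ≤ t → u t ≤ B → m ≤ u' t) : ∀ᶠ t in atTop, B ≤ u t := by
  obtain ⟨t₀, ht₀, hut₀⟩ := exists_image_ge_of_hasDerivAt_ge_below hu hm hB
  filter_upwards [eventually_ge_atTop t₀] with t ht
  have := image_le_of_hasDerivAt_nonpos_above (u := fun t => -u t) (u' := fun t => -u' t)
    (B := -B) (fun t ht => (hu t (ht₀.trans ht)).neg) (neg_le_neg hut₀)
    (fun t ht hle => by linarith [hB t (ht₀.trans ht) (by linarith)]) t ht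
  linarith

namespace MichaelisMenten

noncomputable def disc (e0 KM q : ℝ) : ℝ := √((e0 + KM + q) ^ 2 - 4 * e0 * q)

/-- `hMinus e0 KM (s0 - p)` is the paper's `h⁻(p)`, and `hMinus e0 KM s0 = λ`. -/
noncomputable def hMinus (e0 KM q : ℝ) : ℝ := (e0 + KM + q) / 2 - disc e0 KM q / 2

noncomputable def hPlus (e0 KM q : ℝ) : ℝ := (e0 + KM + q) / 2 + disc e0 KM q / 2

section Roots

variable {e0 KM : ℝ}

theorem radicand_pos (he0 : 0 < e0) (hKM : 0 < KM) (q : ℝ) :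
    0 < (e0 + KM + q) ^ 2 - 4 * e0 * q := by
  nlinarith [sq_nonneg (q + KM - e0), mul_pos he0 hKM]

theorem disc_pos (he0 : 0 < e0) (hKM : 0 < KM) (q : ℝ) : 0 < disc e0 KM q :=
  sqrt_pos.2 (radicand_pos he0 hKM q)

theorem disc_sq (he0 : 0 < e0) (hKM : 0 < KM) (q : ℝ) :
    disc e0 KM q ^ 2 = (q + KM - e0) ^ 2 + 4 * e0 * KM := by
  rw [disc, sq_sqrt (radicand_pos he0 hKM q).le]
  ring

theorem hMinus_mul_hPlus (he0 : 0 < e0) (hKM : 0 < KM) (q : ℝ) :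
    hMinus e0 KM q * hPlus e0 KM q = e0 * q := by
  unfold hMinus hPlus
  linear_combination (-1 / 4 : ℝ) * disc_sq he0 hKM q

theorem sub_mul_sub_sub_eq (he0 : 0 < e0) (hKM : 0 < KM) (q x : ℝ) :
    (e0 - x) * (q - x) - KM * x = (x - hMinus e0 KM q) * (x - hPlus e0 KM q) := by
  unfold hMinus hPlus
  linear_combination (1 / 4 : ℝ) * disc_sq he0 hKM q

theorem hMinus_le (he0 : 0 < e0) (hKM : 0 < KM) (q : ℝ) : hMinus e0 KM q ≤ e0 := by
  have := disc_sq he0 hKM q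
  have := (disc_pos he0 hKM q).le
  rw [hMinus]
  nlinarith [sq_nonneg (q + KM - e0), mul_pos he0 hKM]

theorem add_le_hPlus (he0 : 0 < e0) (hKM : 0 < KM) {q : ℝ} (hq : 0 ≤ q) :
    e0 + KM ≤ hPlus e0 KM q := by
  have := disc_sq he0 hKM q
  have := (disc_pos he0 hKM q).le
  rw [hPlus]
  nlinarith

theorem le_hPlus (he0 : 0 < e0) (hKM : 0 < KM) (q : ℝ) : q ≤ hPlus e0 KM q := by
  have := disc_sq he0 hKM q
  have := (disc_pos he0 hKM q).le
  rw [hPlus]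
  nlinarith

theorem hMinus_pos (he0 : 0 < e0) (hKM : 0 < KM) {q : ℝ} (hq : 0 < q) :
    0 < hMinus e0 KM q := by
  have hplus := add_le_hPlus he0 hKM hq.le
  exact pos_of_mul_pos_left (hMinus_mul_hPlus he0 hKM q ▸ mul_pos he0 hq) (by linarith)

theorem hasDerivAt_hMinus (he0 : 0 < e0) (hKM : 0 < KM) (q : ℝ) :
    HasDerivAt (hMinus e0 KM) ((e0 - hMinus e0 KM q) / disc e0 KM q) q := by
  have hq := (hasDerivAt_id' q).const_add (e0 + KM)
  have hrad := (hq.fun_pow 2).fun_sub ((hasDerivAt_id' q).const_mul (4 * e0))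
  refine ((hq.div_const 2).fun_sub
    ((hrad.sqrt (radicand_pos he0 hKM q).ne').div_const 2)).congr_deriv ?_
  have hD := (disc_pos he0 hKM q).ne'
  rw [hMinus, ← disc]
  field_simp
  ring

theorem add_mul_le_two_mul_disc_mul_hPlus (he0 : 0 < e0) (hKM : 0 < KM) {q : ℝ} (hq : 0 ≤ q) :
    (e0 + KM) * (KM + √(KM ^ 2 + 4 * e0 * KM)) ≤ 2 * disc e0 KM q * hPlus e0 KM q := by
  set S := √(KM ^ 2 + 4 * e0 * KM)
  have hS : S ^ 2 = KM ^ 2 + 4 * e0 * KM := sq_sqrt (by positivity)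
  -- in terms of `y = h⁺ - e0 ≥ KM` the discriminant is `y + e0 KM / y`
  set y := hPlus e0 KM q - e0
  have hy : KM ≤ y := by linarith [add_le_hPlus he0 hKM hq]
  have hDy : disc e0 KM q * y = y ^ 2 + e0 * KM := by
    simp only [y, hPlus]
    linear_combination (1 / 4 : ℝ) * disc_sq he0 hKM q
  have hpoly : (e0 + KM) * (KM + S) * y ≤ 2 * (y + e0) * (y ^ 2 + e0 * KM) := by
    nlinarith [mul_nonneg (add_pos he0 hKM).le (sq_nonneg (S - y)),
      mul_nonneg (sub_nonneg.2 hy) (sq_nonneg y),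
      mul_nonneg (sub_nonneg.2 hy) (mul_pos he0 hKM).le,
      mul_nonneg (sub_nonneg.2 hy) (mul_pos hKM hKM).le]
  refine le_of_mul_le_mul_right ?_ (hKM.trans_le hy)
  calc (e0 + KM) * (KM + S) * y ≤ 2 * (y + e0) * (y ^ 2 + e0 * KM) := hpoly
    _ = 2 * disc e0 KM q * hPlus e0 KM q * y := by rw [← hDy]; ring

theorem slope_hMinus_le (he0 : 0 < e0) (hKM : 0 < KM) {q : ℝ} (hq : 0 ≤ q) :
    (e0 - hMinus e0 KM q) / disc e0 KM q * ((e0 + KM) * (KM + √(KM ^ 2 + 4 * e0 * KM)))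
      ≤ 2 * e0 * (hPlus e0 KM q - q) := by
  have hD := disc_pos he0 hKM q
  have hplus := add_le_hPlus he0 hKM hq
  have hbound := add_mul_le_two_mul_disc_mul_hPlus he0 hKM hq
  have hqplus := le_hPlus he0 hKM q
  have hprod : (e0 - hMinus e0 KM q) * hPlus e0 KM q = e0 * (hPlus e0 KM q - q) := by
    linear_combination -hMinus_mul_hPlus he0 hKM q
  rw [div_mul_eq_mul_div, div_le_iff₀ hD]
  refine le_of_mul_le_mul_right ?_ (by linarith : 0 < hPlus e0 KM q)
  calc (e0 - hMinus e0 KM q) * ((e0 + KM) * (KM + √(KM ^ 2 + 4 * e0 * KM))) * hPlus e0 KM q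
      = e0 * (hPlus e0 KM q - q) * ((e0 + KM) * (KM + √(KM ^ 2 + 4 * e0 * KM))) := by
        rw [← hprod]; ring
    _ ≤ e0 * (hPlus e0 KM q - q) * (2 * disc e0 KM q * hPlus e0 KM q) := by gcongr
    _ = 2 * e0 * (hPlus e0 KM q - q) * disc e0 KM q * hPlus e0 KM q := by ring

end Roots

noncomputable def errorRate (k1 k2 e0 KM q x : ℝ) : ℝ :=
  k1 * ((e0 - x) * (q - x) - KM * x) + (e0 - hMinus e0 KM q) / disc e0 KM q * (k2 * x)

section ErrorRate

variable {k1 k2 e0 KM : ℝ}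

theorem hasDerivAt_sub_hMinus (he0 : 0 < e0) (hKM : 0 < KM) {c p : ℝ → ℝ} {s0 t : ℝ}
    (hc : HasDerivAt c (k1 * (e0 - c t) * (s0 - c t - p t) - k1 * KM * c t) t)
    (hp : HasDerivAt p (k2 * c t) t) :
    HasDerivAt (fun t => c t - hMinus e0 KM (s0 - p t))
      (errorRate k1 k2 e0 KM (s0 - p t) (c t)) t := by
  refine (hc.sub ((hasDerivAt_hMinus he0 hKM _).comp t (hp.const_sub s0))).congr_deriv ?_
  simp only [errorRate]
  ring

theorem errorRate_nonpos (he0 : 0 < e0) (hKM : 0 < KM) (hk1 : 0 ≤ k1) (hk2 : 0 ≤ k2)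
    {q x lam B : ℝ} (hx : 0 ≤ x) (hxlam : x ≤ lam) (hxq : x ≤ q)
    (hB : k1 * B * ((e0 + KM) * (KM + √(KM ^ 2 + 4 * e0 * KM))) = 2 * lam * e0 * k2)
    (hBx : B ≤ x - hMinus e0 KM q) :
    errorRate k1 k2 e0 KM q x ≤ 0 := by
  set X := (e0 + KM) * (KM + √(KM ^ 2 + 4 * e0 * KM))
  have hq : 0 ≤ q := hx.trans hxq
  have hqplus := le_hPlus he0 hKM q
  have hreact : k1 * ((e0 - x) * (q - x) - KM * x) ≤ k1 * B * (x - hPlus e0 KM q) := by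
    rw [sub_mul_sub_sub_eq he0 hKM, mul_assoc]
    exact mul_le_mul_of_nonneg_left (mul_le_mul_of_nonpos_right hBx (by linarith)) hk1
  have hdrift : (e0 - hMinus e0 KM q) / disc e0 KM q * (k2 * x)
      ≤ k1 * B * (hPlus e0 KM q - x) := by
    refine le_of_mul_le_mul_right ?_ (by positivity : 0 < X)
    calc (e0 - hMinus e0 KM q) / disc e0 KM q * (k2 * x) * X
        = (e0 - hMinus e0 KM q) / disc e0 KM q * X * (k2 * x) := by ring
      _ ≤ 2 * e0 * (hPlus e0 KM q - q) * (k2 * lam) :=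
        mul_le_mul (slope_hMinus_le he0 hKM hq) (by gcongr) (by positivity)
          (by have := sub_nonneg.2 hqplus; positivity)
      _ ≤ 2 * e0 * (hPlus e0 KM q - x) * (k2 * lam) :=
        mul_le_mul_of_nonneg_right (by gcongr) (mul_nonneg hk2 (hx.trans hxlam))
      _ = k1 * B * (hPlus e0 KM q - x) * X := by
        linear_combination (hPlus e0 KM q - x) * hB.symm
  simp only [errorRate]
  linarith

theorem errorRate_ge (he0 : 0 < e0) (hKM : 0 < KM) (hk1 : 0 ≤ k1) (hk2 : 0 ≤ k2)
    {q x B : ℝ} (hq : 0 ≤ q) (hx : 0 ≤ x) (hB : 0 ≤ B) (hBx : x - hMinus e0 KM q ≤ -B) :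
    k1 * B * KM ≤ errorRate k1 k2 e0 KM q x := by
  have hplus := add_le_hPlus he0 hKM hq
  have hminus := hMinus_le he0 hKM q
  have hdrift : 0 ≤ (e0 - hMinus e0 KM q) / disc e0 KM q * (k2 * x) := by
    have := disc_pos he0 hKM q
    have := sub_nonneg.2 hminus
    positivity
  have hreact : k1 * B * KM ≤ k1 * ((e0 - x) * (q - x) - KM * x) := by
    rw [sub_mul_sub_sub_eq he0 hKM, mul_assoc, ← neg_mul_neg (x - _)]
    exact mul_le_mul_of_nonneg_left
      (mul_le_mul (by linarith) (by linarith) hKM.le (by linarith)) hk1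
  simp only [errorRate]
  linarith

theorem mul_epsLT_mul_eq {km1 η κ εLT : ℝ} (hk1 : 0 < k1) (hk2 : 0 < k2) (he0 : 0 < e0)
    (hKMpos : 0 < KM) (hKM : KM = (km1 + k2) / k1) (hη : η = e0 / KM) (hκ : κ = km1 / k2)
    (hεLT : εLT = (η / (1 + η)) * (1 / (1 + κ))
      * (2 * KM / (KM + √(KM ^ 2 + 4 * e0 * KM)))) :
    k1 * εLT * ((e0 + KM) * (KM + √(KM ^ 2 + 4 * e0 * KM))) = 2 * e0 * k2 := by
  have hk1KM : k1 * KM = km1 + k2 := by rw [hKM]; field_simp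
  have : 0 < k2 + km1 := add_comm km1 k2 ▸ hk1KM ▸ mul_pos hk1 hKMpos
  have : 0 < KM + √(KM ^ 2 + 4 * e0 * KM) := by positivity
  rw [hεLT, hη, hκ]
  field_simp
  linear_combination (e0 + KM) * hk1KM

end ErrorRate

end MichaelisMenten

open MichaelisMenten in
/-- tightened long-time (limsup) bound for the total QSSA error, with the
small parameter ε_LT that vanishes as K_M → 0. -/
theorem tQSSA_limsup_bound (k1 km1 k2 e0 s0 KM lam η κ εLT : ℝ)
    (hk1 : 0 < k1) (hkm1 : 0 < km1) (hk2 : 0 < k2) (he0 : 0 < e0) (hs0 : 0 < s0)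
    (hKM : KM = (km1 + k2) / k1)
    (hlam : lam = (e0 + KM + s0) / 2 - Real.sqrt ((e0 + KM + s0) ^ 2 - 4 * e0 * s0) / 2)
    (hη : η = e0 / KM) (hκ : κ = km1 / k2)
    (hεLT : εLT = (η / (1 + η)) * (1 / (1 + κ))
      * (2 * KM / (KM + Real.sqrt (KM ^ 2 + 4 * e0 * KM))))
    (c p : ℝ → ℝ)
    (hc : ∀ t : ℝ, 0 ≤ t →
      HasDerivAt c (k1 * (e0 - c t) * (s0 - c t - p t) - k1 * KM * c t) t)
    (hp : ∀ t : ℝ, 0 ≤ t → HasDerivAt p (k2 * c t) t)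
    (hc0 : c 0 = 0) (hp0 : p 0 = 0)
    (hcb : ∀ t : ℝ, 0 ≤ t → 0 ≤ c t ∧ c t ≤ lam)
    (hpb : ∀ t : ℝ, 0 ≤ t → 0 ≤ p t ∧ c t + p t ≤ s0) :
    Filter.limsup
      (fun t : ℝ =>
        (c t - ((e0 + KM + s0 - p t) / 2
          - Real.sqrt ((e0 + KM + s0 - p t) ^ 2 - 4 * e0 * (s0 - p t)) / 2)) ^ 2)
      Filter.atTop ≤ lam ^ 2 * εLT ^ 2 := by
  have hKMpos : 0 < KM := hKM ▸ by positivity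
  have hlam' : lam = hMinus e0 KM s0 := hlam
  have hlampos : 0 < lam := hlam' ▸ hMinus_pos he0 hKMpos hs0
  have hε := mul_epsLT_mul_eq hk1 hk2 he0 hKMpos hKM hη hκ hεLT
  have hεpos : 0 < εLT := by
    have h := hε ▸ (by positivity : 0 < 2 * e0 * k2)
    exact pos_of_mul_pos_right (pos_of_mul_pos_left h (by positivity)) hk1.le
  set B := lam * εLT
  have hBpos : 0 < B := mul_pos hlampos hεpos
  set u := fun t => c t - hMinus e0 KM (s0 - p t)
  have hu t (ht : 0 ≤ t) : HasDerivAt u (errorRate k1 k2 e0 KM (s0 - p t) (c t)) t :=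
    hasDerivAt_sub_hMinus he0 hKMpos (hc t ht) (hp t ht)
  have hupper : ∀ t, 0 ≤ t → u t ≤ B := by
    refine image_le_of_hasDerivAt_nonpos_above hu ?_ fun t ht hBu =>
      errorRate_nonpos he0 hKMpos hk1.le hk2.le (hcb t ht).1 (hcb t ht).2
        (by linarith [(hpb t ht).2]) (by linear_combination lam * hε) hBu
    simp only [u, hc0, hp0, sub_zero, ← hlam']
    linarith
  have hlower : ∀ᶠ t in Filter.atTop, -B ≤ u t :=
    eventually_image_ge_of_hasDerivAt_ge_below hu (by positivity : 0 < k1 * B * KM)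
      fun t ht hBu => errorRate_ge he0 hKMpos hk1.le hk2.le
        (by linarith [(hpb t ht).2, (hcb t ht).1]) (hcb t ht).1 hBpos.le hBu
  have hsq : ∀ᶠ t in Filter.atTop, u t ^ 2 ≤ lam ^ 2 * εLT ^ 2 := by
    filter_upwards [hlower, Filter.eventually_ge_atTop 0] with t hlo ht
    rw [← mul_pow]
    exact sq_le_sq' hlo (hupper t ht)
  simp only [add_sub_assoc]
  exact Filter.limsup_le_of_le (Filter.isCoboundedUnder_le_of_le _ fun t => sq_nonneg _) hsq
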